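/- Let k, ε > 0 and k_ε > 0, and suppose j₀(k_ε) ≠ 0 and the real number condition j₀'(k_ε)/j₀(k_ε) = -ε - kε² tan(kε) holds (with cos(kε) ≠ 0). Write h₀ = j₀ + i y₀ with j₀(t) = sin(t)/t, y₀(t) = -cos(t)/t. Then in the expression α₀ = -(kε j₀'(kε) j₀(k_ε) - (1/ε) k_ε j₀(kε) j₀'(k_ε)) / (kε h₀'(kε) j₀(k_ε) - (1/ε) k_ε h₀(kε) j₀'(k_ε)), the imaginary part of the denominator vanishes and the denominator equals the numerator, so that α₀ = -1 (assuming the denominator is nonzero). -/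

import Mathlib

open Real Complex

/-- Spherical Bessel function of the first kind of order 0: `j₀(t) = sin t / t`. -/
noncomputable def sphj0 (t : ℝ) : ℝ := Real.sin t / t

/-- Spherical Bessel function of the second kind of order 0: `y₀(t) = -cos t / t`. -/
noncomputable def sphy0 (t : ℝ) : ℝ := -Real.cos t / t

/-- Spherical Hankel function of the first kind of order 0: `h₀ = j₀ + i y₀`. -/
noncomputable def sphh0 (t : ℝ) : ℂ :=
  Complex.ofReal (sphj0 t) + Complex.I * Complex.ofReal (sphy0 t)

/-!
With `t = kε`, one has `t y₀'(t) = (-1 - t tan t) y₀(t)`, so the matching condition says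
`k_ε j₀'(k_ε) / j₀(k_ε) = ε · t y₀'(t) / y₀(t)`. Hence the `y₀`-part of the denominator, which is
its imaginary part, cancels, and the remaining `j₀`-part is exactly the numerator.
-/

theorem hasDerivAt_sphj0 {t : ℝ} (ht : t ≠ 0) :
    HasDerivAt sphj0 ((Real.cos t * t - Real.sin t) / t ^ 2) t :=
  ((Real.hasDerivAt_sin t).div (hasDerivAt_id' t) ht).congr_deriv (by ring)

theorem hasDerivAt_sphy0 {t : ℝ} (ht : t ≠ 0) :
    HasDerivAt sphy0 ((Real.sin t * t + Real.cos t) / t ^ 2) t :=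
  ((Real.hasDerivAt_cos t).neg.div (hasDerivAt_id' t) ht).congr_deriv (by simp)

theorem deriv_sphh0 {t : ℝ} (ht : t ≠ 0) :
    deriv sphh0 t = ((deriv sphj0 t : ℝ) : ℂ) + I * ((deriv sphy0 t : ℝ) : ℂ) := by
  have hj := hasDerivAt_sphj0 ht
  have hy := hasDerivAt_sphy0 ht
  have hh : HasDerivAt sphh0 _ t := hj.ofReal_comp.add (hy.ofReal_comp.const_mul I)
  rw [hh.deriv, hj.deriv, hy.deriv]

theorem mul_deriv_sphy0 {t : ℝ} (ht : t ≠ 0) (hcos : Real.cos t ≠ 0) :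
    t * deriv sphy0 t = (-1 - t * Real.tan t) * sphy0 t := by
  rw [(hasDerivAt_sphy0 ht).deriv, sphy0, Real.tan_eq_sin_div_cos]
  field_simp
  ring

theorem stmt10_general (k ε kε' : ℝ) (hk : 0 < k) (hε : 0 < ε)
    (hj : sphj0 kε' ≠ 0) (hcos : Real.cos (k * ε) ≠ 0)
    (hmatch : kε' * deriv sphj0 kε' / sphj0 kε' = -ε - k * ε ^ 2 * Real.tan (k * ε)) :
    ((k * ε) * deriv sphh0 (k * ε) * Complex.ofReal (sphj0 kε')
        - (1 / ε : ℂ) * kε' * sphh0 (k * ε) * Complex.ofReal (deriv sphj0 kε')).im = 0 ∧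
    (k * ε) * deriv sphh0 (k * ε) * Complex.ofReal (sphj0 kε')
        - (1 / ε : ℂ) * kε' * sphh0 (k * ε) * Complex.ofReal (deriv sphj0 kε')
      = Complex.ofReal ((k * ε) * deriv sphj0 (k * ε) * sphj0 kε'
          - (1 / ε) * kε' * sphj0 (k * ε) * deriv sphj0 kε') ∧
    ((k * ε) * deriv sphh0 (k * ε) * Complex.ofReal (sphj0 kε')
        - (1 / ε : ℂ) * kε' * sphh0 (k * ε) * Complex.ofReal (deriv sphj0 kε') ≠ 0 →
      -Complex.ofReal ((k * ε) * deriv sphj0 (k * ε) * sphj0 kε'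
          - (1 / ε) * kε' * sphj0 (k * ε) * deriv sphj0 kε')
        / ((k * ε) * deriv sphh0 (k * ε) * Complex.ofReal (sphj0 kε')
            - (1 / ε : ℂ) * kε' * sphh0 (k * ε) * Complex.ofReal (deriv sphj0 kε'))
        = -1) := by
  have ht : k * ε ≠ 0 := (mul_pos hk hε).ne'
  have hmatch' : kε' * deriv sphj0 kε' = ε * (-1 - k * ε * Real.tan (k * ε)) * sphj0 kε' := by
    rw [div_eq_iff hj] at hmatch
    linear_combination hmatch
  have hy_cancel : (k * ε) * deriv sphy0 (k * ε) * sphj0 kε'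
      = (1 / ε) * kε' * sphy0 (k * ε) * deriv sphj0 kε' := by
    field_simp
    linear_combination ε * sphj0 kε' * mul_deriv_sphy0 ht hcos - sphy0 (k * ε) * hmatch'
  have hD : (k * ε) * deriv sphh0 (k * ε) * Complex.ofReal (sphj0 kε')
        - (1 / ε : ℂ) * kε' * sphh0 (k * ε) * Complex.ofReal (deriv sphj0 kε')
      = Complex.ofReal ((k * ε) * deriv sphj0 (k * ε) * sphj0 kε'
          - (1 / ε) * kε' * sphj0 (k * ε) * deriv sphj0 kε') := by
    rw [deriv_sphh0 ht, sphh0]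
    have hy_cancel_ℂ := congrArg Complex.ofReal hy_cancel
    push_cast at hy_cancel_ℂ ⊢
    linear_combination I * hy_cancel_ℂ
  refine ⟨by rw [hD]; exact ofReal_im _, hD, fun hne => ?_⟩
  rw [hD] at hne ⊢
  exact neg_div_self hne

/-- choosing the interior wavenumber `k_ε` so that
`k_ε j₀'(k_ε)/j₀(k_ε) = -ε - k ε² tan(kε)` kills the imaginary part of the
denominator of the reflection coefficient; the denominator then equals the
numerator, so `α₀ = -1`. -/
theorem stmt10 (k ε kε' : ℝ) (hk : 0 < k) (hε : 0 < ε) (hkε' : 0 < kε')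
    (hj : sphj0 kε' ≠ 0) (hcos : Real.cos (k * ε) ≠ 0)
    (hmatch : kε' * deriv sphj0 kε' / sphj0 kε' = -ε - k * ε ^ 2 * Real.tan (k * ε)) :
    ((k * ε) * deriv sphh0 (k * ε) * Complex.ofReal (sphj0 kε')
        - (1 / ε : ℂ) * kε' * sphh0 (k * ε) * Complex.ofReal (deriv sphj0 kε')).im = 0 ∧
    (k * ε) * deriv sphh0 (k * ε) * Complex.ofReal (sphj0 kε')
        - (1 / ε : ℂ) * kε' * sphh0 (k * ε) * Complex.ofReal (deriv sphj0 kε')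
      = Complex.ofReal ((k * ε) * deriv sphj0 (k * ε) * sphj0 kε'
          - (1 / ε) * kε' * sphj0 (k * ε) * deriv sphj0 kε') ∧
    ((k * ε) * deriv sphh0 (k * ε) * Complex.ofReal (sphj0 kε')
        - (1 / ε : ℂ) * kε' * sphh0 (k * ε) * Complex.ofReal (deriv sphj0 kε') ≠ 0 →
      -Complex.ofReal ((k * ε) * deriv sphj0 (k * ε) * sphj0 kε'
          - (1 / ε) * kε' * sphj0 (k * ε) * deriv sphj0 kε')
        / ((k * ε) * deriv sphh0 (k * ε) * Complex.ofReal (sphj0 kε')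
            - (1 / ε : ℂ) * kε' * sphh0 (k * ε) * Complex.ofReal (deriv sphj0 kε'))
        = -1) :=
  stmt10_general k ε kε' hk hε hj hcos hmatch
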